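/- arXiv:2103.04315 — 3 statements merged into one kernel-verified Lean document; each statement's English description precedes it below -/
import Mathlib

section
/- Let A = S⁻¹ Σ S be an n×n complex matrix with S invertible and Σ = diag(σ₁,…,σₙ), and suppose σᵢ σⱼ* ≠ 1 for all i,j. Then X₀ := S⁻¹ ((S Q Sᴴ) ∘ M) S⁻ᴴ, where M_{ij} = (1 − σᵢ σⱼ*)⁻¹, satisfies the discrete Lyapunov equation X = A X Aᴴ + Q. -/
open Matrix

/-- for diagonalizable `A = S⁻¹ (diag σ) S` with `σ i (σ j)* ≠ 1`,
`X₀ = S⁻¹ ((S Q Sᴴ) ∘ M) S⁻ᴴ` solves the discrete Lyapunov equation. -/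
theorem dle_closed_form {n : ℕ} (S A Q : Matrix (Fin n) (Fin n) ℂ) (σ : Fin n → ℂ)
    (hS : IsUnit S) (hA : A = S⁻¹ * diagonal σ * S)
    (hσ : ∀ i j, σ i * star (σ j) ≠ 1) :
    let M : Matrix (Fin n) (Fin n) ℂ := Matrix.of fun i j => (1 - σ i * star (σ j))⁻¹
    let X₀ := S⁻¹ * Matrix.hadamard (S * Q * Sᴴ) M * (Sᴴ)⁻¹
    X₀ = A * X₀ * Aᴴ + Q := by
  intro M X₀
  have hdet : IsUnit S.det := (isUnit_iff_isUnit_det S).mp hS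
  have hdetH : IsUnit (Sᴴ).det := by rw [Matrix.det_conjTranspose]; exact hdet.star
  set B := S * Q * Sᴴ with hBdef
  have hAH : Aᴴ = Sᴴ * diagonal (fun i => star (σ i)) * (Sᴴ)⁻¹ := by
    rw [hA]
    simp [conjTranspose_mul, conjTranspose_nonsing_inv, diagonal_conjTranspose,
      Matrix.mul_assoc]
    rfl
  have key : Matrix.hadamard B M =
      diagonal σ * Matrix.hadamard B M * diagonal (fun i => star (σ i)) + B := by
    ext i j
    have hne : (1 : ℂ) - σ i * (starRingEnd ℂ) (σ j) ≠ 0 :=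
      sub_ne_zero.mpr (Ne.symm (hσ i j))
    have h1 : (1 - σ i * (starRingEnd ℂ) (σ j)) * (1 - σ i * (starRingEnd ℂ) (σ j))⁻¹ = 1 :=
      mul_inv_cancel₀ hne
    simp only [Matrix.hadamard, Matrix.add_apply, diagonal_mul, mul_diagonal, M,
      Matrix.of_apply, Complex.star_def]
    linear_combination (B i j) * h1
  have hAX : A * X₀ * Aᴴ =
      S⁻¹ * (diagonal σ * Matrix.hadamard B M * diagonal (fun i => star (σ i))) * (Sᴴ)⁻¹ := by
    rw [hAH, hA]
    show S⁻¹ * diagonal σ * S * (S⁻¹ * Matrix.hadamard B M * (Sᴴ)⁻¹) *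
      (Sᴴ * diagonal (fun i => star (σ i)) * (Sᴴ)⁻¹) = _
    simp only [Matrix.mul_assoc]
    rw [Matrix.nonsing_inv_mul_cancel_left _ _ hdetH,
      Matrix.mul_nonsing_inv_cancel_left _ _ hdet]
  have hQ : S⁻¹ * B * (Sᴴ)⁻¹ = Q := by
    rw [hBdef, show S * Q * Sᴴ = S * (Q * Sᴴ) by rw [Matrix.mul_assoc]]
    rw [← Matrix.mul_assoc, Matrix.nonsing_inv_mul S hdet, Matrix.one_mul,
      Matrix.mul_assoc, Matrix.mul_nonsing_inv _ hdetH, Matrix.mul_one]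
  have hX : X₀ = S⁻¹ * (diagonal σ * Matrix.hadamard B M * diagonal (fun i => star (σ i)) + B) * (Sᴴ)⁻¹ := by
    show S⁻¹ * Matrix.hadamard B M * (Sᴴ)⁻¹ = _
    rw [← key]
  rw [hAX, hX, Matrix.mul_add, Matrix.add_mul, hQ]
end

section
/- Let A = S⁻¹ Σ S be a diagonalizable n×n complex matrix whose eigenvalues all have absolute value less than 1, and Q any n×n complex matrix. Then the matrix series Σ_{l=0}^∞ Aˡ Q (Aˡ)ᴴ converges and equals S⁻¹ ((S Q Sᴴ) ∘ M) S⁻ᴴ, where M_{ij} = (1 − σᵢ σⱼ*)⁻¹ and σᵢ are the eigenvalues of A (diagonal entries of Σ). -/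
open Matrix

/-! The similarity `A = S⁻¹ diag(σ) S` turns the `l`-th term into
`S⁻¹ (diag(σ)ˡ (S Q Sᴴ) diag(σ*)ˡ) S⁻ᴴ`, whose middle factor has `(i, j)` entry
`(σᵢ σⱼ*)ˡ (S Q Sᴴ)ᵢⱼ`. Entrywise these are geometric series with ratio of norm `< 1`, summing
to `(S Q Sᴴ)ᵢⱼ / (1 - σᵢ σⱼ*)`, and multiplying by the constant matrices `S⁻¹`, `S⁻ᴴ` on either
side preserves the sum. -/

namespace Matrix

variable {m n 𝕜 : Type*} [Fintype m] [Fintype n] [DecidableEq m] [DecidableEq n]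

theorem pow_inv_mul_mul_of_isUnit [CommRing 𝕜] {S : Matrix n n 𝕜} (hS : IsUnit S)
    (M : Matrix n n 𝕜) (l : ℕ) : (S⁻¹ * M * S) ^ l = S⁻¹ * M ^ l * S := by
  obtain ⟨u, rfl⟩ := hS
  simpa only [coe_units_inv] using u.conj_pow' M l

theorem hasSum_diagonal_pow_mul_mul_diagonal_pow [NormedField 𝕜] [CompleteSpace 𝕜]
    (a : m → 𝕜) (b : n → 𝕜) (B : Matrix m n 𝕜) (hab : ∀ i j, ‖a i * b j‖ < 1) :
    HasSum (fun l : ℕ => diagonal (a ^ l) * B * diagonal (b ^ l))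
      (B ⊙ of fun i j => (1 - a i * b j)⁻¹) := by
  refine Pi.hasSum.mpr fun i => Pi.hasSum.mpr fun j => ?_
  have hterm : ∀ l : ℕ, (diagonal (a ^ l) * B * diagonal (b ^ l)) i j = (a i * b j) ^ l * B i j :=
    fun l => by simp only [mul_diagonal, diagonal_mul, Pi.pow_apply]; ring
  simpa only [hterm, hadamard_apply, of_apply, mul_comm (B i j)] using
    (hasSum_geometric_of_norm_lt_one (hab i j)).mul_right (B i j)

end Matrix

/-- for diagonalizable `A = S⁻¹ (diag σ) S` with all `|σ i| < 1`,
`∑ l, A^l Q (A^l)ᴴ` converges and equals `S⁻¹ ((S Q Sᴴ) ∘ M) S⁻ᴴ`,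
`M i j = (1 - σ i (σ j)*)⁻¹`. -/
theorem dle_series_closed_form {n : ℕ} (S A Q : Matrix (Fin n) (Fin n) ℂ)
    (σ : Fin n → ℂ) (hS : IsUnit S) (hA : A = S⁻¹ * diagonal σ * S)
    (hσ : ∀ i, ‖σ i‖ < 1) :
    HasSum (fun l : ℕ => A ^ l * Q * (A ^ l)ᴴ)
      (S⁻¹ * Matrix.hadamard (S * Q * Sᴴ)
        (Matrix.of fun i j => (1 - σ i * star (σ j))⁻¹) * (Sᴴ)⁻¹) := by
  have hterm : ∀ l : ℕ, A ^ l * Q * (A ^ l)ᴴ =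
      S⁻¹ * (diagonal (σ ^ l) * (S * Q * Sᴴ) * diagonal (star σ ^ l)) * (Sᴴ)⁻¹ := fun l => by
    rw [hA, pow_inv_mul_mul_of_isUnit hS, diagonal_pow]
    simp only [conjTranspose_mul, conjTranspose_nonsing_inv, diagonal_conjTranspose, star_pow,
      Matrix.mul_assoc]
  have hratio : ∀ i j, ‖σ i * (star σ) j‖ < 1 := fun i j => by
    rw [Pi.star_apply, norm_mul, norm_star]
    exact mul_lt_one_of_nonneg_of_lt_one_left (norm_nonneg _) (hσ i) (hσ j).le
  simp only [hterm]
  exact ((hasSum_diagonal_pow_mul_mul_diagonal_pow σ (star σ) _ hratio).mul_left S⁻¹).mul_right _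
end

section
/- Let A be an n×n Hermitian matrix with all eigenvalues of modulus less than 1, with spectral decomposition A = O Σ Oᴴ for unitary O and real diagonal Σ = diag(σ₁,…,σₙ). Then X₀ := O ((Oᴴ Q O) ∘ M) Oᴴ, where M_{ij} = (1 − σᵢ σⱼ)⁻¹, satisfies X = A X Aᴴ + Q. -/
open Matrix

/-- for Hermitian `A = O (diag σ) Oᴴ` with `O` unitary, `σ` real,
and all `|σ i| < 1`, `X₀ = O ((Oᴴ Q O) ∘ M) Oᴴ` with
`M i j = (1 - σ i σ j)⁻¹` solves `X = A X Aᴴ + Q`. -/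
theorem dle_hermitian_closed_form {n : ℕ} (A O Q : Matrix (Fin n) (Fin n) ℂ)
    (σ : Fin n → ℝ) (hHerm : A.IsHermitian) (hO : O * Oᴴ = 1)
    (hA : A = O * diagonal (fun i => (σ i : ℂ)) * Oᴴ)
    (hσ : ∀ i, |σ i| < 1) :
    let X₀ := O * Matrix.hadamard (Oᴴ * Q * O)
      (Matrix.of fun i j => ((1 - σ i * σ j : ℝ)⁻¹ : ℂ)) * Oᴴ
    X₀ = A * X₀ * Aᴴ + Q := by
  intro X₀
  have hO' : Oᴴ * O = 1 := mul_eq_one_comm.mp hO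
  have hAH : Aᴴ = A := hHerm
  set D : Matrix (Fin n) (Fin n) ℂ := diagonal (fun i => (σ i : ℂ)) with hD
  set B : Matrix (Fin n) (Fin n) ℂ := Oᴴ * Q * O with hB
  set H : Matrix (Fin n) (Fin n) ℂ :=
    Matrix.hadamard B (Matrix.of fun i j => ((1 - σ i * σ j : ℝ)⁻¹ : ℂ)) with hH
  have hQ : Q = O * B * Oᴴ := by
    rw [hB]
    simp only [← Matrix.mul_assoc]
    rw [hO, Matrix.one_mul, Matrix.mul_assoc, hO, Matrix.mul_one]
  have hDH : Dᴴ = D := by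
    rw [hD, Matrix.diagonal_conjTranspose]
    have hst : (star fun i => ((σ i : ℂ))) = fun i => ((σ i : ℂ)) := by
      funext i
      exact Complex.conj_ofReal _
    rw [hst]
  have key : A * (O * H * Oᴴ) * Aᴴ = O * (D * H * D) * Oᴴ := by
    rw [hAH, hA]
    calc O * D * Oᴴ * (O * H * Oᴴ) * (O * D * Oᴴ)
        = O * D * (Oᴴ * O) * H * (Oᴴ * O) * D * Oᴴ := by
          simp only [Matrix.mul_assoc]
      _ = O * (D * H * D) * Oᴴ := by rw [hO']; simp [Matrix.mul_assoc]
  have hent : H = D * H * D + B := by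
    ext i j
    have habs : |σ i * σ j| < 1 := by
      calc |σ i * σ j| = |σ i| * |σ j| := abs_mul _ _
        _ < 1 := by
          have h1 := hσ i; have h2 := hσ j
          have := abs_nonneg (σ i); have := abs_nonneg (σ j)
          nlinarith
    have hne' : (1 - σ i * σ j : ℝ) ≠ 0 := by
      rcases abs_lt.mp habs with ⟨h1, h2⟩
      intro h; linarith [sub_eq_zero.mp h]
    have hne : ((1 - σ i * σ j : ℝ) : ℂ) ≠ 0 := by exact_mod_cast hne'
    simp only [hH, Matrix.add_apply, hD, Matrix.hadamard_apply,
      Matrix.diagonal_mul, Matrix.mul_diagonal, Matrix.of_apply]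
    have hne2 : (1:ℂ) - σ i * σ j ≠ 0 := by push_cast at hne; exact hne
    push_cast
    field_simp [hne2]
    ring
  show O * H * Oᴴ = A * (O * H * Oᴴ) * Aᴴ + Q
  rw [key, hQ, ← Matrix.add_mul, ← Matrix.mul_add, ← hent]
end
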